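/- Every accumulation point f* of a sequence (f^k) generated by the algorithm, starting from a nonzero mean-zero f^0, is a critical point of the energy E, i.e., 0 ∈ ∂T(f*) − E(f*)·∂B(f*). -/

import Mathlib

open Finset Filter Topology

noncomputable def meanV {n : ℕ} (f : Fin n → ℝ) : ℝ := (∑ i, f i) / n
noncomputable def TVfun {n : ℕ} (w : Fin n → Fin n → ℝ) (f : Fin n → ℝ) : ℝ :=
  (1/2) * ∑ i, ∑ j, w i j * |f i - f j|
noncomputable def Bfun {n : ℕ} (f : Fin n → ℝ) : ℝ := ∑ i, |f i - meanV f|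
noncomputable def Efun {n : ℕ} (w : Fin n → Fin n → ℝ) (f : Fin n → ℝ) : ℝ :=
  TVfun w f / Bfun f
noncomputable def norm2 {n : ℕ} (f : Fin n → ℝ) : ℝ := Real.sqrt (∑ i, (f i)^2)
noncomputable def dotV {n : ℕ} (u v : Fin n → ℝ) : ℝ := ∑ i, u i * v i
def IsSubgradient {n : ℕ} (F : (Fin n → ℝ) → ℝ) (f v : Fin n → ℝ) : Prop :=
  ∀ y, F f + dotV v (y - f) ≤ F y
def GraphConnected {n : ℕ} (w : Fin n → Fin n → ℝ) : Prop :=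
  ∀ i j : Fin n, Relation.ReflTransGen (fun a b => 0 < w a b) i j
def Nonconstant {n : ℕ} (f : Fin n → ℝ) : Prop := ∃ i j, f i ≠ f j
def signSet (t : ℝ) : Set ℝ := if t > 0 then {1} else if t < 0 then {-1} else Set.Icc (-1) 1
noncomputable def P0 {n : ℕ} (f : Fin n → ℝ) : Fin n → ℝ := fun i => f i - meanV f

/-!
Translation invariance of T and B keeps every iterate mean-zero, and the proximal step never
returns 0, so E(f^k) > 0 throughout. Testing the proximal problem with u = f^k and using the
subgradient inequality for v^k ∈ ∂B(f^k) gives the sufficient decrease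
E(f^k) ‖h^k - f^k‖² ≤ 2c B(h^k) (E(f^k) - E(f^{k+1})). Hence E(f^k) decreases to E(f*) > 0, and
since B(h^k) stays bounded, ‖h^k - f^k‖ → 0, so h^k → f* along the subsequence. The optimality
condition of the proximal problem says (E(f^k)/c)(g^k - h^k) ∈ ∂T(h^k); on a further subsequence
v^k → v*, and closedness of the subdifferentials of the continuous functions T and B gives
v* ∈ ∂B(f*) and E(f*) v* ∈ ∂T(f*).
-/

variable {n : ℕ}

section Vectors

lemma dotV_eq_dotProduct (u v : Fin n → ℝ) : dotV u v = u ⬝ᵥ v := rfl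

lemma norm2_sq (x : Fin n → ℝ) : norm2 x ^ 2 = x ⬝ᵥ x := by
  rw [norm2, Real.sq_sqrt (by positivity)]
  simp [dotProduct, sq]

lemma norm2_eq_norm (x : Fin n → ℝ) :
    norm2 x = ‖(WithLp.toLp 2 x : EuclideanSpace ℝ (Fin n))‖ := by
  simp [norm2, EuclideanSpace.norm_eq]

lemma norm2_nonneg (x : Fin n → ℝ) : 0 ≤ norm2 x := Real.sqrt_nonneg _

lemma norm2_add_le (x y : Fin n → ℝ) : norm2 (x + y) ≤ norm2 x + norm2 y := by
  simpa [norm2_eq_norm] using norm_add_le (WithLp.toLp 2 x : EuclideanSpace ℝ (Fin n)) _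

lemma norm2_smul (t : ℝ) (x : Fin n → ℝ) : norm2 (t • x) = |t| * norm2 x := by
  simp [norm2_eq_norm, norm_smul]

lemma norm2_neg (x : Fin n → ℝ) : norm2 (-x) = norm2 x := by
  simp [norm2_eq_norm]

lemma norm2_pos {x : Fin n → ℝ} (hx : x ≠ 0) : 0 < norm2 x := by
  simpa [norm2_eq_norm] using hx

lemma continuous_norm2 : Continuous (norm2 (n := n)) := by
  unfold norm2; fun_prop

lemma abs_apply_le_norm2 (x : Fin n → ℝ) (i : Fin n) : |x i| ≤ norm2 x :=
  Real.abs_le_sqrt (single_le_sum (f := fun j => x j ^ 2) (fun _ _ => sq_nonneg _) (mem_univ i))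

lemma norm_le_norm2 (x : Fin n → ℝ) : ‖x‖ ≤ norm2 x :=
  (pi_norm_le_iff_of_nonneg (norm2_nonneg x)).2 fun i => abs_apply_le_norm2 x i

lemma norm2_le_of_abs_le {x : Fin n → ℝ} {r : ℝ} (hr : 0 ≤ r) (hx : ∀ i, |x i| ≤ r) :
    norm2 x ≤ √n * r := by
  rw [norm2, ← Real.sqrt_sq hr, ← Real.sqrt_mul n.cast_nonneg]
  refine Real.sqrt_le_sqrt ?_
  calc ∑ i, x i ^ 2 ≤ ∑ _i : Fin n, r ^ 2 :=
        sum_le_sum fun i _ => by simpa using pow_le_pow_left₀ (abs_nonneg _) (hx i) 2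
    _ = n * r ^ 2 := by simp

lemma sum_eq_mul_meanV (x : Fin n → ℝ) : ∑ i, x i = n * meanV x := by
  rcases Nat.eq_zero_or_pos n with rfl | hn
  · simp
  · rw [meanV, mul_div_cancel₀ _ (by positivity)]

lemma meanV_smul (t : ℝ) (x : Fin n → ℝ) : meanV (t • x) = t * meanV x := by
  simp [meanV, ← mul_sum, mul_div_assoc]

lemma continuous_meanV : Continuous (meanV (n := n)) := by
  unfold meanV; fun_prop

end Vectors

section Subgradient

variable {F : (Fin n → ℝ) → ℝ} {f v : Fin n → ℝ}

lemma IsSubgradient.dotProduct_eq_zero_of_invariant {d : Fin n → ℝ}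
    (hF : ∀ x (t : ℝ), F (x + t • d) = F x) (hv : IsSubgradient F f v) : v ⬝ᵥ d = 0 := by
  have h₁ := hv (f + (1 : ℝ) • d)
  have h₂ := hv (f + (-1 : ℝ) • d)
  simp only [hF, dotV_eq_dotProduct, add_sub_cancel_left, dotProduct_smul, smul_eq_mul] at h₁ h₂
  linarith

lemma IsSubgradient.abs_apply_le {L : ℝ} (hF : ∀ x d, F (x + d) ≤ F x + L * ∑ i, |d i|)
    (hv : IsSubgradient F f v) (i : Fin n) : |v i| ≤ L := by
  have key : ∀ s : ℝ, v i * s ≤ L * |s| := fun s => by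
    have h₁ := hv (f + Pi.single i s)
    have h₂ := hF f (Pi.single i s)
    have hsum : ∑ j, |Pi.single (M := fun _ => ℝ) i s j| = |s| := by
      rw [sum_eq_single i] <;> simp +contextual
    simp only [dotV_eq_dotProduct, add_sub_cancel_left, dotProduct_single, hsum] at h₁ h₂
    linarith
  have h₁ := key 1
  have h₂ := key (-1)
  rw [mul_one, abs_one, mul_one] at h₁
  rw [mul_neg_one, abs_neg, abs_one, mul_one] at h₂
  exact abs_le.2 ⟨by linarith, h₁⟩

lemma IsSubgradient.of_tendsto (hF : Continuous F) {x u : ℕ → Fin n → ℝ}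
    (hx : Tendsto x atTop (𝓝 f)) (hu : Tendsto u atTop (𝓝 v))
    (hsub : ∀ k, IsSubgradient F (x k) (u k)) : IsSubgradient F f v := fun y => by
  have hdot : Continuous fun p : (Fin n → ℝ) × (Fin n → ℝ) => p.1 ⬝ᵥ p.2 := by fun_prop
  exact le_of_tendsto' (((hF.tendsto f).comp hx).add
    ((hdot.tendsto (v, y - f)).comp (hu.prodMk_nhds (tendsto_const_nhds.sub hx))))
    fun k => hsub k y

end Subgradient

lemma nonneg_of_forall_nonneg_add_mul {a b : ℝ} (h : ∀ t : ℝ, 0 < t → t ≤ 1 → 0 ≤ a + t * b) :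
    0 ≤ a := by
  have hlim : Tendsto (fun t : ℝ => a + t * b) (𝓝[>] 0) (𝓝 a) := by
    simpa using (((by fun_prop : Continuous fun t : ℝ => a + t * b).tendsto 0).mono_left
      nhdsWithin_le_nhds)
  exact ge_of_tendsto hlim (eventually_of_mem (Ioc_mem_nhdsGT one_pos) fun t ht => h t ht.1 ht.2)

def IsProxMin (F : (Fin n → ℝ) → ℝ) (E c : ℝ) (g h : Fin n → ℝ) : Prop :=
  ∀ u, F h + E * norm2 (h - g) ^ 2 / (2 * c) ≤ F u + E * norm2 (u - g) ^ 2 / (2 * c)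

section Prox

variable {F : (Fin n → ℝ) → ℝ} {E c : ℝ} {g h : Fin n → ℝ}

lemma IsProxMin.two_mul_le (hc : 0 < c) (hh : IsProxMin F E c g h) (u : Fin n → ℝ) :
    2 * c * F h + E * ((h - g) ⬝ᵥ (h - g)) ≤ 2 * c * F u + E * ((u - g) ⬝ᵥ (u - g)) := by
  have := mul_le_mul_of_nonneg_left (hh u) (by positivity : (0 : ℝ) ≤ 2 * c)
  rw [norm2_sq, norm2_sq] at this
  field_simp at this
  linarith

lemma IsProxMin.isSubgradient (hF : ConvexOn ℝ Set.univ F) (hc : 0 < c)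
    (hh : IsProxMin F E c g h) : IsSubgradient F h ((E / c) • (g - h)) := by
  intro y
  set d := y - h
  -- compare h with the points h + t (y - h) of the segment, then let t → 0
  have key : ∀ t : ℝ, 0 < t → t ≤ 1 →
      0 ≤ 2 * c * (F y - F h) + 2 * E * ((h - g) ⬝ᵥ d) + t * (E * (d ⬝ᵥ d)) := by
    intro t ht₀ ht₁
    have hmin := hh.two_mul_le hc (h + t • d)
    have hconv : F (h + t • d) ≤ (1 - t) * F h + t * F y := by
      have hseg : h + t • d = (1 - t) • h + t • y := by
        simp only [d, smul_sub, sub_smul, one_smul]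
        abel
      rw [hseg]
      exact hF.2 (Set.mem_univ h) (Set.mem_univ y) (by linarith) ht₀.le (by ring)
    have hexp : (h + t • d - g) ⬝ᵥ (h + t • d - g)
        = (h - g) ⬝ᵥ (h - g) + 2 * t * ((h - g) ⬝ᵥ d) + t ^ 2 * (d ⬝ᵥ d) := by
      rw [add_sub_right_comm]
      simp only [add_dotProduct, dotProduct_add, smul_dotProduct, dotProduct_smul, smul_eq_mul,
        dotProduct_comm d (h - g)]
      ring
    rw [hexp] at hmin
    have : 0 ≤ t * (2 * c * (F y - F h) + 2 * E * ((h - g) ⬝ᵥ d) + t * (E * (d ⬝ᵥ d))) := by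
      nlinarith
    exact nonneg_of_mul_nonneg_right (by linarith) ht₀
  have hlin := nonneg_of_forall_nonneg_add_mul key
  have hdot : dotV ((E / c) • (g - h)) d = -(E * ((h - g) ⬝ᵥ d)) / c := by
    rw [dotV_eq_dotProduct, smul_dotProduct, ← neg_sub h g, neg_dotProduct, smul_eq_mul]
    ring
  rw [hdot, neg_div, ← sub_eq_add_neg, sub_le_iff_le_add, ← sub_le_iff_le_add', le_div_iff₀ hc]
  linarith

lemma IsProxMin.norm2_sub_le (hc : 0 < c) (hE : 0 < E) (hF : ∀ u, F 0 ≤ F u)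
    (hh : IsProxMin F E c g h) : norm2 (h - g) ≤ norm2 g := by
  have h₁ := hh 0
  have h₂ := hF h
  rw [zero_sub, norm2_neg] at h₁
  have : norm2 (h - g) ^ 2 ≤ norm2 g ^ 2 := by
    have := div_le_div_iff_of_pos_right (by positivity : (0:ℝ) < 2 * c) |>.1
      (by linarith : E * norm2 (h - g) ^ 2 / (2 * c) ≤ E * norm2 g ^ 2 / (2 * c))
    exact le_of_mul_le_mul_left this hE
  exact pow_le_pow_iff_left₀ (norm2_nonneg _) (norm2_nonneg _) two_ne_zero |>.1 this

lemma IsProxMin.descent {G : (Fin n → ℝ) → ℝ} {f v : Fin n → ℝ} (hc : 0 < c) (hE : 0 ≤ E)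
    (hEG : E * G f = F f) (hv : IsSubgradient G f v) (hh : IsProxMin F E c (f + c • v) h) :
    2 * c * F h + E * norm2 (h - f) ^ 2 ≤ 2 * c * E * G h := by
  have hmin := hh.two_mul_le hc f
  have hsub := mul_le_mul_of_nonneg_left (hv h) (by positivity : 0 ≤ 2 * c * E)
  have hexp : (h - (f + c • v)) ⬝ᵥ (h - (f + c • v))
      = (h - f) ⬝ᵥ (h - f) - 2 * c * (v ⬝ᵥ (h - f)) + c ^ 2 * (v ⬝ᵥ v) := by
    rw [← sub_sub]
    simp only [sub_dotProduct, dotProduct_sub, smul_dotProduct, dotProduct_smul, smul_eq_mul,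
      dotProduct_comm (h - f) v]
    ring
  rw [sub_add_cancel_left, hexp] at hmin
  simp only [neg_dotProduct, dotProduct_neg, smul_dotProduct, dotProduct_smul, smul_eq_mul] at hmin
  rw [dotV_eq_dotProduct] at hsub
  rw [norm2_sq]
  nlinarith

end Prox

section Functionals

variable {w : Fin n → Fin n → ℝ}

lemma Bfun_smul {t : ℝ} (ht : 0 ≤ t) (x : Fin n → ℝ) : Bfun (t • x) = t * Bfun x := by
  simp only [Bfun, meanV_smul, Pi.smul_apply, smul_eq_mul, ← mul_sub, abs_mul, abs_of_nonneg ht,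
    ← mul_sum]

lemma Bfun_add_smul_one (x : Fin n → ℝ) (t : ℝ) : Bfun (x + t • 1) = Bfun x := by
  rcases Nat.eq_zero_or_pos n with rfl | hn
  · simp [Bfun]
  have hmean : meanV (x + t • 1) = meanV x + t := by
    simp only [meanV, Pi.add_apply, Pi.smul_apply, Pi.one_apply, smul_eq_mul, mul_one,
      sum_add_distrib, sum_const, card_univ, Fintype.card_fin, nsmul_eq_mul]
    field_simp
  simp only [Bfun, hmean, Pi.add_apply, Pi.smul_apply, Pi.one_apply, smul_eq_mul, mul_one,
    add_sub_add_right_eq_sub]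

lemma Bfun_add_le (x d : Fin n → ℝ) : Bfun (x + d) ≤ Bfun x + 2 * ∑ i, |d i| := by
  have hmean : n * |meanV d| ≤ ∑ i, |d i| := by
    rw [← abs_of_nonneg (Nat.cast_nonneg (α := ℝ) n), ← abs_mul, ← sum_eq_mul_meanV]
    exact abs_sum_le_sum_abs _ _
  have hterm : ∀ i, |(x + d) i - meanV (x + d)| ≤ |x i - meanV x| + (|d i| + |meanV d|) := by
    intro i
    have hsplit : (x + d) i - meanV (x + d) = (x i - meanV x) + (d i - meanV d) := by
      simp only [meanV, Pi.add_apply, sum_add_distrib, add_div]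
      ring
    rw [hsplit]
    exact (abs_add_le _ _).trans (add_le_add_right (abs_sub _ _) _)
  calc Bfun (x + d) ≤ ∑ i, (|x i - meanV x| + (|d i| + |meanV d|)) := sum_le_sum fun i _ => hterm i
    _ = Bfun x + (∑ i, |d i| + n * |meanV d|) := by simp [Bfun, sum_add_distrib]
    _ ≤ Bfun x + 2 * ∑ i, |d i| := by linarith

lemma Bfun_zero : Bfun (0 : Fin n → ℝ) = 0 := by simp [Bfun, meanV]

lemma Bfun_le_norm2 (x : Fin n → ℝ) : Bfun x ≤ 2 * n * norm2 x := by
  calc Bfun x ≤ 2 * ∑ i, |x i| := by simpa [Bfun_zero] using Bfun_add_le 0 x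
    _ ≤ 2 * ∑ _i : Fin n, norm2 x := by gcongr with i; exact abs_apply_le_norm2 x i
    _ = 2 * n * norm2 x := by simp [mul_assoc]

lemma continuous_Bfun : Continuous (Bfun (n := n)) := by
  unfold Bfun meanV; fun_prop

lemma Bfun_pos {x : Fin n → ℝ} (hm : meanV x = 0) (hx : x ≠ 0) : 0 < Bfun x := by
  refine (sum_nonneg fun i _ => abs_nonneg _).lt_of_ne fun h => hx ?_
  ext i
  simpa [hm] using (sum_eq_zero_iff_of_nonneg fun i _ => abs_nonneg _).1 h.symm i (mem_univ i)

lemma isSubgradient_Bfun_abs_le {f v : Fin n → ℝ} (hv : IsSubgradient Bfun f v) (i : Fin n) :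
    |v i| ≤ 2 :=
  hv.abs_apply_le Bfun_add_le i

lemma TVfun_nonneg (hnn : ∀ i j, 0 ≤ w i j) (x : Fin n → ℝ) : 0 ≤ TVfun w x := by
  unfold TVfun
  exact mul_nonneg (by norm_num) (sum_nonneg fun i _ => sum_nonneg fun j _ =>
    mul_nonneg (hnn i j) (abs_nonneg _))

lemma TVfun_zero (w : Fin n → Fin n → ℝ) : TVfun w 0 = 0 := by simp [TVfun]

lemma TVfun_smul {t : ℝ} (ht : 0 ≤ t) (x : Fin n → ℝ) : TVfun w (t • x) = t * TVfun w x := by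
  simp only [TVfun, Pi.smul_apply, smul_eq_mul, ← mul_sub, abs_mul, abs_of_nonneg ht,
    mul_left_comm (w _ _) t, ← mul_sum]
  ring

lemma TVfun_add_smul_one (x : Fin n → ℝ) (t : ℝ) : TVfun w (x + t • 1) = TVfun w x := by
  simp [TVfun]

lemma convexOn_TVfun (hnn : ∀ i j, 0 ≤ w i j) : ConvexOn ℝ Set.univ (TVfun w) := by
  refine ⟨convex_univ, fun x _ y _ a b ha hb hab => ?_⟩
  have hterm : ∀ i j, w i j * |(a • x + b • y) i - (a • x + b • y) j|
      ≤ a * (w i j * |x i - x j|) + b * (w i j * |y i - y j|) := by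
    intro i j
    have hsplit : (a • x + b • y) i - (a • x + b • y) j = a * (x i - x j) + b * (y i - y j) := by
      simp only [Pi.add_apply, Pi.smul_apply, smul_eq_mul]
      ring
    calc w i j * |(a • x + b • y) i - (a • x + b • y) j|
        ≤ w i j * (a * |x i - x j| + b * |y i - y j|) := by
          rw [hsplit]
          refine mul_le_mul_of_nonneg_left ((abs_add_le _ _).trans_eq ?_) (hnn i j)
          rw [abs_mul, abs_mul, abs_of_nonneg ha, abs_of_nonneg hb]
      _ = a * (w i j * |x i - x j|) + b * (w i j * |y i - y j|) := by ring
  calc TVfun w (a • x + b • y)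
      ≤ 1 / 2 * ∑ i, ∑ j, (a * (w i j * |x i - x j|) + b * (w i j * |y i - y j|)) := by
        unfold TVfun; gcongr with i _ j _; exact hterm i j
    _ = a • TVfun w x + b • TVfun w y := by
        simp only [TVfun, sum_add_distrib, ← mul_sum, smul_eq_mul]
        ring

lemma continuous_TVfun (w : Fin n → Fin n → ℝ) : Continuous (TVfun w) := by
  unfold TVfun; fun_prop

lemma apply_eq_of_TVfun_eq_zero (hnn : ∀ i j, 0 ≤ w i j) (hconn : GraphConnected w)
    {x : Fin n → ℝ} (hx : TVfun w x = 0) (i j : Fin n) : x i = x j := by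
  have hedge : ∀ a b, 0 < w a b → x a = x b := by
    intro a b hab
    have hsum : ∑ i, ∑ j, w i j * |x i - x j| = 0 := by
      unfold TVfun at hx; linarith
    have hnn' : ∀ i j, 0 ≤ w i j * |x i - x j| := fun i j => mul_nonneg (hnn i j) (abs_nonneg _)
    have := (sum_eq_zero_iff_of_nonneg fun j _ => hnn' a j).1
      ((sum_eq_zero_iff_of_nonneg fun i _ => sum_nonneg fun j _ => hnn' i j).1 hsum a
        (mem_univ a)) b (mem_univ b)
    simpa [hab.ne', sub_eq_zero] using this
  induction hconn i j with
  | refl => rfl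
  | tail _ hbc ih => exact ih.trans (hedge _ _ hbc)

lemma TVfun_pos (hnn : ∀ i j, 0 ≤ w i j) (hconn : GraphConnected w) {x : Fin n → ℝ}
    (hm : meanV x = 0) (hx : x ≠ 0) : 0 < TVfun w x := by
  refine (TVfun_nonneg hnn x).lt_of_ne fun h => hx ?_
  ext i
  have hsum := sum_eq_mul_meanV x
  rw [hm, mul_zero, sum_congr rfl fun j _ => apply_eq_of_TVfun_eq_zero hnn hconn h.symm j i]
    at hsum
  have : (n : ℝ) ≠ 0 := Nat.cast_ne_zero.2 (Fin.pos i).ne'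
  simpa [this] using hsum

lemma Efun_smul {t : ℝ} (ht : 0 < t) (x : Fin n → ℝ) : Efun w (t • x) = Efun w x := by
  rw [Efun, Efun, TVfun_smul ht.le, Bfun_smul ht.le, mul_div_mul_left _ _ ht.ne']

lemma Efun_pos (hnn : ∀ i j, 0 ≤ w i j) (hconn : GraphConnected w) {x : Fin n → ℝ}
    (hm : meanV x = 0) (hx : x ≠ 0) : 0 < Efun w x :=
  div_pos (TVfun_pos hnn hconn hm hx) (Bfun_pos hm hx)

lemma continuousAt_Efun {x : Fin n → ℝ} (hx : Bfun x ≠ 0) : ContinuousAt (Efun w) x :=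
  (continuous_TVfun w).continuousAt.div continuous_Bfun.continuousAt hx

end Functionals

section ProxStep

variable {w : Fin n → Fin n → ℝ} {c : ℝ} {f v h : Fin n → ℝ}

lemma Bfun_le_of_isProxMin {E : ℝ} (hnn : ∀ i j, 0 ≤ w i j) (hc : 0 < c) (hE : 0 < E)
    (hv : IsSubgradient Bfun f v) (hh : IsProxMin (TVfun w) E c (f + c • v) h) :
    Bfun h ≤ 4 * n * (norm2 f + 2 * c * √n) := by
  have hg : norm2 (f + c • v) ≤ norm2 f + 2 * c * √n := by
    have hv₂ : norm2 v ≤ √n * 2 := norm2_le_of_abs_le zero_le_two (isSubgradient_Bfun_abs_le hv)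
    calc norm2 (f + c • v) ≤ norm2 f + c * norm2 v := by
          simpa [norm2_smul, abs_of_pos hc] using norm2_add_le f (c • v)
      _ ≤ norm2 f + 2 * c * √n := by nlinarith
  have hh' : norm2 h ≤ 2 * norm2 (f + c • v) := by
    have := hh.norm2_sub_le hc hE fun u => (TVfun_zero w).symm ▸ TVfun_nonneg hnn u
    simpa [two_mul] using (norm2_add_le (h - (f + c • v)) (f + c • v)).trans (by linarith)
  calc Bfun h ≤ 2 * n * norm2 h := Bfun_le_norm2 h
    _ ≤ 4 * n * (norm2 f + 2 * c * √n) := by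
        have := n.cast_nonneg (α := ℝ)
        nlinarith

lemma proxStep_descent (hnn : ∀ i j, 0 ≤ w i j) (hconn : GraphConnected w) (hc : 0 < c)
    (hm : meanV f = 0) (hf : f ≠ 0) (hv : IsSubgradient Bfun f v)
    (hh : IsProxMin (TVfun w) (Efun w f) c (f + c • v) h) :
    2 * c * TVfun w h + Efun w f * norm2 (h - f) ^ 2 ≤ 2 * c * Efun w f * Bfun h :=
  hh.descent hc (Efun_pos hnn hconn hm hf).le (div_mul_cancel₀ _ (Bfun_pos hm hf).ne') hv

lemma proxStep_ne_zero (hnn : ∀ i j, 0 ≤ w i j) (hconn : GraphConnected w) (hc : 0 < c)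
    (hm : meanV f = 0) (hf : f ≠ 0) (hv : IsSubgradient Bfun f v)
    (hh : IsProxMin (TVfun w) (Efun w f) c (f + c • v) h) : h ≠ 0 := by
  rintro rfl
  have hdesc := proxStep_descent hnn hconn hc hm hf hv hh
  rw [TVfun_zero, Bfun_zero, zero_sub, norm2_neg] at hdesc
  have := mul_pos (Efun_pos hnn hconn hm hf) (pow_pos (norm2_pos hf) 2)
  linarith

lemma proxStep_meanV_eq_zero (hnn : ∀ i j, 0 ≤ w i j) (hconn : GraphConnected w) (hc : 0 < c)
    (hm : meanV f = 0) (hf : f ≠ 0) (hv : IsSubgradient Bfun f v)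
    (hh : IsProxMin (TVfun w) (Efun w f) c (f + c • v) h) : meanV h = 0 := by
  have hvsum := hv.dotProduct_eq_zero_of_invariant Bfun_add_smul_one
  have hsum := (hh.isSubgradient (convexOn_TVfun hnn) hc).dotProduct_eq_zero_of_invariant
    TVfun_add_smul_one
  have hEc : Efun w f / c ≠ 0 := (div_pos (Efun_pos hnn hconn hm hf) hc).ne'
  rw [smul_dotProduct, smul_eq_mul, mul_eq_zero, or_iff_right hEc] at hsum
  rw [dotProduct_one] at hvsum hsum
  simp only [Pi.sub_apply, Pi.add_apply, Pi.smul_apply, smul_eq_mul, sum_sub_distrib,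
    sum_add_distrib, ← mul_sum, hvsum, sum_eq_mul_meanV f, hm] at hsum
  rw [meanV, show ∑ i, h i = 0 by linarith, zero_div]

lemma proxStep_Bfun_pos (hnn : ∀ i j, 0 ≤ w i j) (hconn : GraphConnected w) (hc : 0 < c)
    (hm : meanV f = 0) (hf : f ≠ 0) (hv : IsSubgradient Bfun f v)
    (hh : IsProxMin (TVfun w) (Efun w f) c (f + c • v) h) : 0 < Bfun h :=
  Bfun_pos (proxStep_meanV_eq_zero hnn hconn hc hm hf hv hh)
    (proxStep_ne_zero hnn hconn hc hm hf hv hh)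

lemma proxStep_sufficient_decrease (hnn : ∀ i j, 0 ≤ w i j) (hconn : GraphConnected w)
    (hc : 0 < c) (hm : meanV f = 0) (hf : f ≠ 0) (hv : IsSubgradient Bfun f v)
    (hh : IsProxMin (TVfun w) (Efun w f) c (f + c • v) h) :
    Efun w f * norm2 (h - f) ^ 2 ≤ 2 * c * Bfun h * (Efun w f - Efun w h) := by
  have hT : TVfun w h = Efun w h * Bfun h :=
    (div_mul_cancel₀ _ (proxStep_Bfun_pos hnn hconn hc hm hf hv hh).ne').symm
  have := proxStep_descent hnn hconn hc hm hf hv hh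
  rw [hT] at this
  linarith

lemma proxStep_Efun_le (hnn : ∀ i j, 0 ≤ w i j) (hconn : GraphConnected w) (hc : 0 < c)
    (hm : meanV f = 0) (hf : f ≠ 0) (hv : IsSubgradient Bfun f v)
    (hh : IsProxMin (TVfun w) (Efun w f) c (f + c • v) h) : Efun w h ≤ Efun w f := by
  have hdec := proxStep_sufficient_decrease hnn hconn hc hm hf hv hh
  have hpos := mul_pos (mul_pos two_pos hc) (proxStep_Bfun_pos hnn hconn hc hm hf hv hh)
  have := mul_nonneg (Efun_pos hnn hconn hm hf).le (sq_nonneg (norm2 (h - f)))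
  exact sub_nonneg.1 (nonneg_of_mul_nonneg_right (this.trans hdec) hpos)

end ProxStep

structure IsProxIteration (w : Fin n → Fin n → ℝ) (c : ℝ) (f v h : ℕ → Fin n → ℝ) : Prop where
  isSubgradient : ∀ k, IsSubgradient Bfun (f k) (v k)
  isProxMin : ∀ k, IsProxMin (TVfun w) (Efun w (f k)) c (f k + c • v k) (h k)
  succ_eq : ∀ k, f (k + 1) = (norm2 (h k))⁻¹ • h k

namespace IsProxIteration

variable {w : Fin n → Fin n → ℝ} {c : ℝ} {f v h : ℕ → Fin n → ℝ}

lemma meanV_eq_zero_and_ne_zero (hit : IsProxIteration w c f v h) (hnn : ∀ i j, 0 ≤ w i j)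
    (hconn : GraphConnected w) (hc : 0 < c) (h₀ : meanV (f 0) = 0) (h₀' : f 0 ≠ 0) (k : ℕ) :
    meanV (f k) = 0 ∧ f k ≠ 0 := by
  induction k with
  | zero => exact ⟨h₀, h₀'⟩
  | succ k ih =>
    have hne := proxStep_ne_zero hnn hconn hc ih.1 ih.2 (hit.isSubgradient k) (hit.isProxMin k)
    have hmean :=
      proxStep_meanV_eq_zero hnn hconn hc ih.1 ih.2 (hit.isSubgradient k) (hit.isProxMin k)
    rw [hit.succ_eq k, meanV_smul, hmean, mul_zero]
    exact ⟨rfl, smul_ne_zero (inv_ne_zero (norm2_pos hne).ne') hne⟩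

lemma h_ne_zero (hit : IsProxIteration w c f v h) (hnn : ∀ i j, 0 ≤ w i j)
    (hconn : GraphConnected w) (hc : 0 < c) (hadm : ∀ k, meanV (f k) = 0 ∧ f k ≠ 0) (k : ℕ) :
    h k ≠ 0 :=
  proxStep_ne_zero hnn hconn hc (hadm k).1 (hadm k).2 (hit.isSubgradient k) (hit.isProxMin k)

lemma norm2_succ (hit : IsProxIteration w c f v h) (hnn : ∀ i j, 0 ≤ w i j)
    (hconn : GraphConnected w) (hc : 0 < c) (hadm : ∀ k, meanV (f k) = 0 ∧ f k ≠ 0) (k : ℕ) :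
    norm2 (f (k + 1)) = 1 := by
  have hpos := norm2_pos (hit.h_ne_zero hnn hconn hc hadm k)
  rw [hit.succ_eq k, norm2_smul, abs_of_pos (inv_pos.2 hpos), inv_mul_cancel₀ hpos.ne']

lemma Efun_succ (hit : IsProxIteration w c f v h) (hnn : ∀ i j, 0 ≤ w i j)
    (hconn : GraphConnected w) (hc : 0 < c) (hadm : ∀ k, meanV (f k) = 0 ∧ f k ≠ 0) (k : ℕ) :
    Efun w (f (k + 1)) = Efun w (h k) := by
  rw [hit.succ_eq k, Efun_smul (inv_pos.2 (norm2_pos (hit.h_ne_zero hnn hconn hc hadm k)))]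

lemma antitone_Efun (hit : IsProxIteration w c f v h) (hnn : ∀ i j, 0 ≤ w i j)
    (hconn : GraphConnected w) (hc : 0 < c) (hadm : ∀ k, meanV (f k) = 0 ∧ f k ≠ 0) :
    Antitone fun k => Efun w (f k) :=
  antitone_nat_of_succ_le fun k => by
    rw [hit.Efun_succ hnn hconn hc hadm k]
    exact proxStep_Efun_le hnn hconn hc (hadm k).1 (hadm k).2 (hit.isSubgradient k)
      (hit.isProxMin k)

lemma tendsto_Efun (hit : IsProxIteration w c f v h) (hnn : ∀ i j, 0 ≤ w i j)
    (hconn : GraphConnected w) (hc : 0 < c) (hadm : ∀ k, meanV (f k) = 0 ∧ f k ≠ 0)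
    {fstar : Fin n → ℝ} {φ : ℕ → ℕ} (hφ : StrictMono φ)
    (hlim : Tendsto (fun k => f (φ k)) atTop (𝓝 fstar)) :
    0 < Efun w fstar ∧ Tendsto (fun k => Efun w (f k)) atTop (𝓝 (Efun w fstar)) := by
  have hmean : meanV fstar = 0 :=
    tendsto_nhds_unique ((continuous_meanV.tendsto fstar).comp hlim)
      (by simp [Function.comp_def, (hadm _).1])
  have hnorm : norm2 fstar = 1 := by
    refine tendsto_nhds_unique ((continuous_norm2.tendsto fstar).comp hlim)
      (tendsto_const_nhds.congr' ?_)
    filter_upwards [hφ.tendsto_atTop.eventually_ge_atTop 1] with k hk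
    obtain ⟨m, hm⟩ := Nat.exists_eq_add_of_le' hk
    simp [hm, hit.norm2_succ hnn hconn hc hadm m]
  have hne : fstar ≠ 0 := by
    rintro rfl
    simp [norm2] at hnorm
  refine ⟨Efun_pos hnn hconn hmean hne,
    (tendsto_iff_tendsto_subseq_of_antitone (hit.antitone_Efun hnn hconn hc hadm)
      hφ.tendsto_atTop).2 ?_⟩
  exact (continuousAt_Efun (Bfun_pos hmean hne).ne').tendsto.comp hlim

lemma tendsto_sub (hit : IsProxIteration w c f v h) (hnn : ∀ i j, 0 ≤ w i j)
    (hconn : GraphConnected w) (hc : 0 < c) (hadm : ∀ k, meanV (f k) = 0 ∧ f k ≠ 0)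
    {L : ℝ} (hL : 0 < L) (hE : Tendsto (fun k => Efun w (f k)) atTop (𝓝 L)) :
    Tendsto (fun k => h k - f k) atTop (𝓝 0) := by
  set C : ℝ := 4 * n * (1 + 2 * c * √n)
  have hanti := hit.antitone_Efun hnn hconn hc hadm
  have hbound : ∀ k, norm2 (h (k + 1) - f (k + 1)) ^ 2
      ≤ 2 * c * C / L * (Efun w (f (k + 1)) - Efun w (f (k + 2))) := by
    intro k
    have hm := hadm (k + 1)
    have hdec := proxStep_sufficient_decrease hnn hconn hc hm.1 hm.2 (hit.isSubgradient _)
      (hit.isProxMin _)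
    have hB := Bfun_le_of_isProxMin hnn hc (Efun_pos hnn hconn hm.1 hm.2) (hit.isSubgradient _)
      (hit.isProxMin (k + 1))
    rw [hit.norm2_succ hnn hconn hc hadm k] at hB
    rw [← hit.Efun_succ hnn hconn hc hadm (k + 1)] at hdec
    have hLE := hanti.le_of_tendsto hE (k + 1)
    have hδ : 0 ≤ Efun w (f (k + 1)) - Efun w (f (k + 2)) := sub_nonneg.2 (hanti (by omega))
    rw [div_mul_eq_mul_div, le_div_iff₀ hL]
    calc norm2 (h (k + 1) - f (k + 1)) ^ 2 * L
        ≤ Efun w (f (k + 1)) * norm2 (h (k + 1) - f (k + 1)) ^ 2 := by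
          rw [mul_comm]; gcongr
      _ ≤ 2 * c * Bfun (h (k + 1)) * (Efun w (f (k + 1)) - Efun w (f (k + 2))) := hdec
      _ ≤ 2 * c * C * (Efun w (f (k + 1)) - Efun w (f (k + 2))) := by gcongr
  have hδ : Tendsto (fun k => Efun w (f (k + 1)) - Efun w (f (k + 2))) atTop (𝓝 0) := by
    simpa using (hE.comp (tendsto_add_atTop_nat 1)).sub (hE.comp (tendsto_add_atTop_nat 2))
  have hN : Tendsto (fun k => norm2 (h (k + 1) - f (k + 1))) atTop (𝓝 0) := by
    have := squeeze_zero (fun k => by positivity) hbound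
      (by simpa using hδ.const_mul (2 * c * C / L))
    simpa [Real.sqrt_sq (norm2_nonneg _)] using this.sqrt
  rw [← tendsto_add_atTop_iff_nat 1]
  exact squeeze_zero_norm (fun k => norm_le_norm2 _) hN

end IsProxIteration

theorem stmt18_general {n : ℕ} (w : Fin n → Fin n → ℝ)
    (hnn : ∀ i j, 0 ≤ w i j)
    (hconn : GraphConnected w) (c : ℝ) (hc : 0 < c)
    (f v h : ℕ → Fin n → ℝ)
    (hf0 : meanV (f 0) = 0) (hf0nz : f 0 ≠ 0)
    (hv : ∀ k, IsSubgradient Bfun (f k) (v k))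
    (hmin : ∀ k, ∀ u : Fin n → ℝ,
      TVfun w (h k) + Efun w (f k) * norm2 (h k - (f k + c • v k))^2 / (2*c)
        ≤ TVfun w u + Efun w (f k) * norm2 (u - (f k + c • v k))^2 / (2*c))
    (hnext : ∀ k, f (k+1) = (norm2 (h k))⁻¹ • h k)
    (fstar : Fin n → ℝ) (φ : ℕ → ℕ) (hφ : StrictMono φ)
    (hlim : Tendsto (fun k => f (φ k)) atTop (𝓝 fstar)) :
    ∃ wst vst : Fin n → ℝ, IsSubgradient (TVfun w) fstar wst ∧
      IsSubgradient Bfun fstar vst ∧ wst - Efun w fstar • vst = 0 := by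
  have hit : IsProxIteration w c f v h := ⟨hv, hmin, hnext⟩
  have hadm := hit.meanV_eq_zero_and_ne_zero hnn hconn hc hf0 hf0nz
  obtain ⟨hEpos, hE⟩ := hit.tendsto_Efun hnn hconn hc hadm hφ hlim
  have hhlim : Tendsto (fun k => h (φ k)) atTop (𝓝 fstar) := by
    simpa using hlim.add ((hit.tendsto_sub hnn hconn hc hadm hEpos hE).comp hφ.tendsto_atTop)
  have hvbdd : ∀ k, v (φ k) ∈ Metric.closedBall (0 : Fin n → ℝ) 2 := fun k => by
    simpa [pi_norm_le_iff_of_nonneg] using isSubgradient_Bfun_abs_le (hv (φ k))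
  obtain ⟨vst, -, ψ, hψ, hvst⟩ := tendsto_subseq_of_bounded Metric.isBounded_closedBall hvbdd
  have hψ := hψ.tendsto_atTop
  refine ⟨Efun w fstar • vst, vst, ?_,
    IsSubgradient.of_tendsto continuous_Bfun (hlim.comp hψ) hvst fun j => hv _, sub_self _⟩
  have hsub : ∀ k, IsSubgradient (TVfun w) (h k) ((Efun w (f k) / c) • (f k + c • v k - h k)) :=
    fun k => (hit.isProxMin k).isSubgradient (convexOn_TVfun hnn) hc
  have hw := ((hE.comp (hφ.tendsto_atTop.comp hψ)).div_const c).smul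
    (((hlim.comp hψ).add (hvst.const_smul c)).sub (hhlim.comp hψ))
  rw [add_sub_cancel_left, smul_smul, div_mul_cancel₀ _ hc.ne'] at hw
  exact IsSubgradient.of_tendsto (continuous_TVfun w) (hhlim.comp hψ) hw fun j => hsub _

theorem stmt18 {n : ℕ} (w : Fin n → Fin n → ℝ)
    (hsym : ∀ i j, w i j = w j i) (hnn : ∀ i j, 0 ≤ w i j)
    (hconn : GraphConnected w) (c : ℝ) (hc : 0 < c)
    (f v h : ℕ → Fin n → ℝ)
    (hf0 : meanV (f 0) = 0) (hf0nz : f 0 ≠ 0)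
    (hv : ∀ k, IsSubgradient Bfun (f k) (v k))
    (hmin : ∀ k, ∀ u : Fin n → ℝ,
      TVfun w (h k) + Efun w (f k) * norm2 (h k - (f k + c • v k))^2 / (2*c)
        ≤ TVfun w u + Efun w (f k) * norm2 (u - (f k + c • v k))^2 / (2*c))
    (hnext : ∀ k, f (k+1) = (norm2 (h k))⁻¹ • h k)
    (fstar : Fin n → ℝ) (φ : ℕ → ℕ) (hφ : StrictMono φ)
    (hlim : Tendsto (fun k => f (φ k)) atTop (𝓝 fstar)) :
    ∃ wst vst : Fin n → ℝ, IsSubgradient (TVfun w) fstar wst ∧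
      IsSubgradient Bfun fstar vst ∧ wst - Efun w fstar • vst = 0 :=
  stmt18_general w hnn hconn c hc f v h hf0 hf0nz hv hmin hnext fstar φ hφ hlim
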